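/- arXiv:2202.08032 — 2 statements merged into one kernel-verified Lean document; each statement's English description precedes it below -/
import Mathlib

section
/- For all $i_1,i_2\in\{1,\dots,i(n)\}$ with $i_1<i_2$, writing $e_{i_1}=(j_1,k_1)$ and $e_{i_2}=(j_2,k_2)$, one has $\|y_{j_1}\|-2\le M(i_1,i_2)\le\|y_{j_1}\|$, where $M(i_1,i_2)=m(j_2,j_1)$ if $k_2\le k_1$ and $M(i_1,i_2)=m(j_2,j_1-1)$ if $k_2>k_1$. -/
open Set

noncomputable section

variable {Γ : Type*} [TopologicalSpace Γ] [DiscreteTopology Γ]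

/-- `ℓ∞(Γ)`: the Banach space of bounded real functions on `Γ`
(carrying the discrete topology, so that boundedness is the only constraint). -/
abbrev Linf (Γ : Type*) [TopologicalSpace Γ] [DiscreteTopology Γ] : Type _ :=
  BoundedContinuousFunction Γ ℝ

/-- The entire part of a real number, toward `0`: `[r] = sign(r)⌊|r|⌋`. -/
def ent (r : ℝ) : ℝ := Real.sign r * ⌊|r|⌋

lemma abs_ent_le (r : ℝ) : |ent r| ≤ |r| := by
  have hsign : |Real.sign r| ≤ 1 := by
    rcases lt_trichotomy r 0 with h | h | h
    · rw [Real.sign_of_neg h]; norm_num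
    · rw [h, Real.sign_zero]; norm_num
    · rw [Real.sign_of_pos h]; norm_num
  have hfl : |(⌊|r|⌋ : ℝ)| ≤ |r| := by
    rw [abs_of_nonneg (by exact_mod_cast Int.floor_nonneg.mpr (abs_nonneg r))]
    exact Int.floor_le _
  calc |ent r| = |Real.sign r| * |(⌊|r|⌋ : ℝ)| := abs_mul _ _
    _ ≤ 1 * |r| := mul_le_mul hsign hfl (abs_nonneg _) zero_le_one
    _ = |r| := one_mul _

/-- The coordinatewise quantization `f : ℓ∞(S) → ℓ∞(S)`, `f(x)(γ) = [x(γ)]`. -/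
def quant (x : Linf Γ) : Linf Γ :=
  BoundedContinuousFunction.ofNormedAddCommGroup (fun γ => ent (x γ))
    continuous_of_discreteTopology ‖x‖ (fun γ => by
      rw [Real.norm_eq_abs]
      exact (abs_ent_le (x γ)).trans (by simpa using x.norm_coe_le_norm γ))

/-- Scalar truncation at level `s`. -/
def truncFun (s t : ℝ) : ℝ := if |t| ≤ s then t else s * t / |t|

lemma abs_truncFun_le (s t : ℝ) : |truncFun s t| ≤ max |s| |t| := by
  unfold truncFun
  split_ifs with h
  · exact le_max_right _ _
  · by_cases ht : t = 0
    · simp [ht]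
    · have hst : abs (s * t / |t|) = |s| := by
        rw [abs_div, abs_mul, abs_abs, mul_div_assoc, div_self (abs_ne_zero.mpr ht), mul_one]
      rw [hst]; exact le_max_left _ _

/-- The truncation of radius `s`: `T_s(x)(γ) = x(γ)` if `|x(γ)| ≤ s`,
and `= s·x(γ)/|x(γ)|` otherwise. -/
def trunc (s : ℝ) (x : Linf Γ) : Linf Γ :=
  BoundedContinuousFunction.ofNormedAddCommGroup (fun γ => truncFun s (x γ))
    continuous_of_discreteTopology (max |s| ‖x‖) (fun γ => by
      rw [Real.norm_eq_abs]
      exact (abs_truncFun_le s (x γ)).trans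
        (max_le_max le_rfl (by simpa using x.norm_coe_le_norm γ)))

/-- The restriction operator `r_S : ℓ∞(Γ) → ℓ∞(S)`, where `ℓ∞(S)` is identified
isometrically with the subspace of `ℓ∞(Γ)` of functions vanishing off `S`. -/
def restr (S : Set Γ) (x : Linf Γ) : Linf Γ :=
  BoundedContinuousFunction.ofNormedAddCommGroup (S.indicator x)
    continuous_of_discreteTopology ‖x‖ (fun γ => by
      rw [Real.norm_eq_abs]
      by_cases h : γ ∈ S
      · rw [Set.indicator_of_mem h]
        simpa using x.norm_coe_le_norm γ
      · rw [Set.indicator_of_notMem h]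
        simp)

/-- The ball `s·B_{ℓ∞(S)}`, viewed inside `ℓ∞(Γ)`: functions supported on `S`
of norm at most `s`. -/
def suppBall (S : Set Γ) (s : ℝ) : Set (Linf Γ) :=
  {x | (∀ γ ∉ S, x γ = 0) ∧ ‖x‖ ≤ s}

/-- `chain T a b = T (a+1) ∘ ⋯ ∘ T b` (the identity if `b ≤ a`). -/
def chain {α : Type*} (T : ℕ → α → α) (a b : ℕ) : α → α :=
  Nat.rec id (fun k ih => ih ∘ T (a + k + 1)) (b - a)

/-- Bourgain–Delbaen data on `Γ`: a strictly increasing sequence of nonempty finite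
sets `Γs n` (for `n ≥ 1`) with union `Γ`, together with compatible bounded linear
extension operators `i n : ℓ∞(Γ_n) → ℓ∞(Γ)` (realized as operators on `ℓ∞(Γ)`
factoring through the restriction `restr (Γs n)`), with norms bounded by the
positive integer `lam`. -/
structure BD (Γ : Type*) [TopologicalSpace Γ] [DiscreteTopology Γ] where
  Γs : ℕ → Set Γ
  lam : ℕ
  i : ℕ → Linf Γ →L[ℝ] Linf Γ
  one_le_lam : 1 ≤ lam
  finite : ∀ n, 1 ≤ n → (Γs n).Finite
  nonempty : ∀ n, 1 ≤ n → (Γs n).Nonempty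
  ssubset : ∀ n, 1 ≤ n → Γs n ⊂ Γs (n + 1)
  iUnion_eq : ⋃ n ∈ {k : ℕ | 1 ≤ k}, Γs n = Set.univ
  extension : ∀ n, 1 ≤ n → ∀ x : Linf Γ, ∀ γ ∈ Γs n, i n x γ = x γ
  factor : ∀ n, 1 ≤ n → ∀ x : Linf Γ, i n (restr (Γs n) x) = i n x
  compatible : ∀ n m, 1 ≤ n → n < m → ∀ x : Linf Γ, i m (restr (Γs m) (i n x)) = i n x
  norm_i_le : ∀ n, 1 ≤ n → ‖i n‖ ≤ (lam : ℝ)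

namespace BD

/-- `s n = λ^n`. -/
def s (B : BD Γ) (n : ℕ) : ℝ := (B.lam : ℝ) ^ n

/-- The sets `M_n` (with `M_0 = ∅`):
`M_n = M_{n-1} ∪ (f ∘ i_n)(f(s_n B_{ℓ∞(Γ_n)}) \ r_n(M_{n-1}))`. -/
def M (B : BD Γ) : ℕ → Set (Linf Γ)
  | 0 => ∅
  | n + 1 =>
      M B n ∪
        (fun z => quant (B.i (n + 1) z)) ''
          (quant '' suppBall (B.Γs (n + 1)) (B.s (n + 1)) \ restr (B.Γs (n + 1)) '' M B n)

/-- `M = ⋃ n, M_n`. -/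
def Mtot (B : BD Γ) : Set (Linf Γ) := ⋃ n, B.M n

/-- `C_n = (f ∘ i_{n+1} ∘ f ∘ T_{s_{n+1}} ∘ r_{n+1} ∘ i_n)
(f(s_{n+1}B_{ℓ∞(Γ_n)}) \ f(s_n B_{ℓ∞(Γ_n)}))`. -/
def C (B : BD Γ) (n : ℕ) : Set (Linf Γ) :=
  (fun z => quant (B.i (n + 1) (quant (trunc (B.s (n + 1)) (restr (B.Γs (n + 1)) (B.i n z)))))) ''
    (quant '' suppBall (B.Γs n) (B.s (n + 1)) \ quant '' suppBall (B.Γs n) (B.s n))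

/-- `D_n = M_n ∪ C_n`. -/
def D (B : BD Γ) (n : ℕ) : Set (Linf Γ) := B.M n ∪ B.C n

end BD

/-!
Every `y j` is integer-valued, and truncating an integer point of norm `N ≥ 1` at level `N - 1`
gives an integer point of norm `N - 1`, i.e. some `y c` with `c < j`. Since `T k` fixes `y c` for
`k > c`, the chain `T (j' + 1) ∘ ⋯ ∘ T j` carries `y j` down through truncations of `y j` whose
norms drop by one at each move, and stops at the first one of index `≤ j'`. That point has norm
`m(j, j')` and is entered from a point of index `> j'`, so
`‖y (j' + 1)‖ - 1 ≤ m(j, j') ≤ ‖y j'‖`. The lexicographic order gives `j₁ < j₂` when `k₂ ≤ k₁`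
and `j₁ - 1 < j₂` otherwise, and monotonicity of the norms of the `y j` finishes the proof.
-/

section IntegerValued

def IsIntValued (x : Linf Γ) : Prop := ∀ γ, ∃ k : ℤ, x γ = k

lemma ent_intCast (k : ℤ) : ent k = k := by
  rw [ent, ← Int.cast_abs, Int.floor_intCast, Real.sign_intCast, ← Int.cast_mul, Int.sign_mul_abs]

lemma exists_ent_eq_intCast (r : ℝ) : ∃ k : ℤ, ent r = k := by
  rcases Real.sign_apply_eq r with h | h | h <;> rw [ent, h]
  exacts [⟨-⌊|r|⌋, by push_cast; ring⟩, ⟨0, by simp⟩, ⟨⌊|r|⌋, one_mul _⟩]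

lemma exists_truncFun_intCast_eq (s k : ℤ) : ∃ l : ℤ, truncFun s k = l := by
  unfold truncFun
  split_ifs
  · exact ⟨k, rfl⟩
  rcases lt_trichotomy k 0 with hk | rfl | hk
  · refine ⟨-s, ?_⟩
    have hk' : (k : ℝ) < 0 := by exact_mod_cast hk
    rw [abs_of_neg hk', div_neg, mul_div_cancel_right₀ _ hk'.ne, Int.cast_neg]
  · exact ⟨0, by simp⟩
  · refine ⟨s, ?_⟩
    have hk' : (0 : ℝ) < k := by exact_mod_cast hk
    rw [abs_of_pos hk', mul_div_cancel_right₀ _ hk'.ne']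

lemma range_quant : range (quant : Linf Γ → Linf Γ) = {x | IsIntValued x} := by
  ext x
  refine ⟨?_, fun hx => ⟨x, ?_⟩⟩
  · rintro ⟨z, rfl⟩ γ
    exact exists_ent_eq_intCast (z γ)
  · ext γ
    obtain ⟨k, hk⟩ := hx γ
    simp only [quant, BoundedContinuousFunction.coe_ofNormedAddCommGroup, hk, ent_intCast]

lemma IsIntValued.trunc {x : Linf Γ} (hx : IsIntValued x) (s : ℤ) :
    IsIntValued (trunc s x) := fun γ => by
  obtain ⟨k, hk⟩ := hx γ
  simpa only [_root_.trunc, BoundedContinuousFunction.coe_ofNormedAddCommGroup, hk]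
    using exists_truncFun_intCast_eq s k

lemma abs_truncFun {s : ℝ} (hs : 0 ≤ s) (t : ℝ) : |truncFun s t| = min s |t| := by
  unfold truncFun
  split_ifs with h
  · rw [min_eq_right h]
  · have ht : t ≠ 0 := by rintro rfl; exact h (by simpa using hs)
    rw [abs_div, abs_mul, abs_abs, abs_of_nonneg hs, mul_div_cancel_right₀ _ (abs_ne_zero.mpr ht),
      min_eq_left (not_le.mp h).le]

variable [Finite Γ] [Nonempty Γ]

lemma exists_norm_eq_abs_apply (x : Linf Γ) : ∃ γ, ‖x‖ = |x γ| := by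
  obtain ⟨γ₀, hγ₀⟩ := Finite.exists_max (fun γ => |x γ|)
  exact ⟨γ₀, le_antisymm ((BoundedContinuousFunction.norm_le (abs_nonneg _)).mpr hγ₀)
    (x.norm_coe_le_norm γ₀)⟩

lemma norm_trunc {s : ℝ} (hs : 0 ≤ s) (x : Linf Γ) : ‖trunc s x‖ = min s ‖x‖ := by
  obtain ⟨γ₀, hγ₀⟩ := exists_norm_eq_abs_apply x
  refine le_antisymm ((BoundedContinuousFunction.norm_le (le_min hs (norm_nonneg x))).mpr
    fun γ => ?_) ?_
  · rw [Real.norm_eq_abs, trunc, BoundedContinuousFunction.coe_ofNormedAddCommGroup,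
      abs_truncFun hs]
    exact min_le_min le_rfl (x.norm_coe_le_norm γ)
  · have := (trunc s x).norm_coe_le_norm γ₀
    rwa [Real.norm_eq_abs, trunc, BoundedContinuousFunction.coe_ofNormedAddCommGroup,
      abs_truncFun hs, ← hγ₀] at this

lemma IsIntValued.exists_norm_eq_natCast {x : Linf Γ} (hx : IsIntValued x) :
    ∃ N : ℕ, ‖x‖ = N := by
  obtain ⟨γ, hγ⟩ := exists_norm_eq_abs_apply x
  obtain ⟨k, hk⟩ := hx γ
  exact ⟨k.natAbs, by rw [hγ, hk, Nat.cast_natAbs, Int.cast_abs]⟩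

end IntegerValued

section Chain

variable {α : Type*} (T : ℕ → α → α) {a b c : ℕ}

lemma chain_of_le (h : b ≤ a) : chain T a b = id := by
  rw [chain, Nat.sub_eq_zero_of_le h]
  rfl

lemma chain_succ (h : a ≤ b) : chain T a (b + 1) = chain T a b ∘ T (b + 1) := by
  obtain ⟨n, rfl⟩ := Nat.exists_eq_add_of_le h
  rw [chain, chain, show a + n + 1 - a = n + 1 by omega, Nat.add_sub_cancel_left]

lemma chain_apply_of_forall_fixed {x : α} (h : ∀ k, a < k → k ≤ b → T k x = x) :
    chain T a b x = x := by
  induction b with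
  | zero => rw [chain_of_le T (Nat.zero_le a), id]
  | succ b ih =>
    rcases le_or_gt (b + 1) a with hb | hb
    · rw [chain_of_le T hb, id]
    · rw [chain_succ T (by omega), Function.comp_apply, h (b + 1) hb le_rfl,
        ih fun k hk hkb => h k hk (by omega)]

lemma chain_comp (hac : a ≤ c) (hcb : c ≤ b) : chain T a c ∘ chain T c b = chain T a b := by
  induction b, hcb using Nat.le_induction with
  | base => rw [chain_of_le T le_rfl, Function.comp_id]
  | succ b hcb ih =>
    rw [chain_succ T hcb, chain_succ T (hac.trans hcb), ← ih, Function.comp_assoc]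

end Chain

structure IsTruncRetractionSeq (y : ℕ → Linf Γ) (T : ℕ → Linf Γ → Linf Γ) : Prop where
  zero : y 0 = 0
  injective : Function.Injective y
  range_eq : range y = {x | IsIntValued x}
  norm_mono : Monotone fun j => ‖y j‖
  apply_self : ∀ j, 1 ≤ j → T j (y j) = trunc (‖y j‖ - 1) (y j)
  apply_of_lt : ∀ j k, k < j → T j (y k) = y k

namespace IsTruncRetractionSeq

variable {y : ℕ → Linf Γ} {T : ℕ → Linf Γ → Linf Γ}

lemma isIntValued (h : IsTruncRetractionSeq y T) (j : ℕ) : IsIntValued (y j) :=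
  show y j ∈ {x | IsIntValued x} from h.range_eq ▸ mem_range_self j

variable [Finite Γ] [Nonempty Γ]

lemma exists_lt_apply_self_eq (h : IsTruncRetractionSeq y T) {j : ℕ} (hj : 1 ≤ j) :
    ∃ c < j, T j (y j) = y c ∧ ‖y c‖ = ‖y j‖ - 1 := by
  obtain ⟨N, hN⟩ := (h.isIntValued j).exists_norm_eq_natCast
  obtain ⟨M, rfl⟩ : ∃ M, N = M + 1 := by
    refine Nat.exists_eq_succ_of_ne_zero fun hN0 => ?_
    have hyj : y j = y 0 := by rw [h.zero, ← norm_eq_zero, hN, hN0, Nat.cast_zero]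
    exact absurd (h.injective hyj) (by omega)
  have hlevel : ‖y j‖ - 1 = ((M : ℤ) : ℝ) := by rw [hN]; push_cast; ring
  obtain ⟨c, hc⟩ : trunc ((M : ℤ) : ℝ) (y j) ∈ range y :=
    h.range_eq ▸ (h.isIntValued j).trunc M
  have hnorm : ‖y c‖ = ‖y j‖ - 1 := by
    rw [hc, norm_trunc (by positivity), hlevel, hN, min_eq_left (by push_cast; linarith)]
  refine ⟨c, ?_, by rw [h.apply_self j hj, hlevel, hc], hnorm⟩
  by_contra! hjc
  linarith [h.norm_mono hjc]

lemma exists_chain_apply_eq (h : IsTruncRetractionSeq y T) (j : ℕ) :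
    ∀ j' < j, ∃ c ≤ j', chain T j' j (y j) = y c ∧
      ‖y (j' + 1)‖ - 1 ≤ ‖y c‖ ∧ ‖y c‖ < ‖y j‖ := by
  induction j using Nat.strong_induction_on with
  | _ j ih =>
    intro j' hj'
    obtain ⟨c₀, hc₀j, hT, hnorm⟩ := h.exists_lt_apply_self_eq (by omega : 1 ≤ j)
    obtain ⟨i, rfl⟩ : ∃ i, j = i + 1 := ⟨j - 1, by omega⟩
    have hstep : chain T j' (i + 1) (y (i + 1)) = chain T j' i (y c₀) := by
      rw [chain_succ T (by omega), Function.comp_apply, hT]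
    rcases le_or_gt c₀ j' with hc₀ | hc₀
    · refine ⟨c₀, hc₀, ?_, ?_, by linarith⟩
      · rw [hstep, chain_apply_of_forall_fixed T fun k hk _ => h.apply_of_lt k c₀ (by omega)]
      · linarith [h.norm_mono (show j' + 1 ≤ i + 1 by omega)]
    · obtain ⟨c, hc, heq, hlow, hlt⟩ := ih c₀ hc₀j j' hc₀
      refine ⟨c, hc, ?_, hlow, by linarith⟩
      rw [hstep, ← chain_comp T hc₀.le (by omega : c₀ ≤ i), Function.comp_apply,
        chain_apply_of_forall_fixed T fun k hk _ => h.apply_of_lt k c₀ hk, heq]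

lemma level_mem_Icc_of_chain_apply_eq_trunc (h : IsTruncRetractionSeq y T) {j j' m : ℕ}
    (hj' : j' < j) (hm : chain T j' j (y j) = trunc m (y j)) :
    (m : ℝ) ∈ Icc (‖y (j' + 1)‖ - 1) ‖y j'‖ := by
  obtain ⟨c, hc, heq, hlow, hlt⟩ := h.exists_chain_apply_eq j j' hj'
  have hmin : min (m : ℝ) ‖y j‖ = ‖y c‖ := by
    rw [← norm_trunc (Nat.cast_nonneg m), ← hm, heq]
  have hm_eq : (m : ℝ) = ‖y c‖ := by
    rcases min_choice (m : ℝ) ‖y j‖ with hmin' | hmin' <;> rw [hmin'] at hmin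
    · exact hmin
    · exact absurd hmin hlt.ne'
  rw [hm_eq]
  exact ⟨hlow, h.norm_mono hc⟩

end IsTruncRetractionSeq

/-- Lemma 11 (`remlip`): for `i₁ < i₂` in the lexicographic enumeration `e` of
`E(n)`, writing `e i₁ = (j₁,k₁)` and `e i₂ = (j₂,k₂)`, the quantity
`M(i₁,i₂)` (equal to `m(j₂,j₁)` if `k₂ ≤ k₁`, and to `m(j₂,j₁-1)` if `k₂ > k₁`)
satisfies `‖y_{j₁}‖ - 2 ≤ M(i₁,i₂) ≤ ‖y_{j₁}‖`. -/
theorem M_bound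
    {Δ : Type*} [TopologicalSpace Δ] [DiscreteTopology Δ] [Finite Δ] [Nonempty Δ]
    (y : ℕ → Linf Δ) (hy0 : y 0 = 0) (hyinj : Function.Injective y)
    (hyrange : Set.range y = Set.range (fun z : Linf Δ => quant z))
    (hymono : ∀ j₁ j₂, j₁ ≤ j₂ → ‖y j₁‖ ≤ ‖y j₂‖)
    (T : ℕ → Linf Δ → Linf Δ)
    (hT_val : ∀ j, 1 ≤ j → T j (y j) = trunc (‖y j‖ - 1) (y j))
    (hT_id : ∀ j k, k < j → T j (y k) = y k)
    (mfun : ℕ → ℕ → ℕ)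
    (hm : ∀ j' j, j' < j → chain T j' j (y j) = trunc ((mfun j j' : ℕ) : ℝ) (y j))
    (I : ℕ) (e : ℕ → ℕ × ℕ)
    (he_pos : ∀ i, 1 ≤ i → i ≤ I → 1 ≤ (e i).1 ∧ 1 ≤ (e i).2)
    (he_lex : ∀ i₁ i₂, 1 ≤ i₁ → i₁ < i₂ → i₂ ≤ I →
      (e i₁).1 < (e i₂).1 ∨ ((e i₁).1 = (e i₂).1 ∧ (e i₁).2 < (e i₂).2))
    (i₁ i₂ : ℕ) (hi₁ : 1 ≤ i₁) (h12 : i₁ < i₂) (hi₂ : i₂ ≤ I) :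
    ‖y (e i₁).1‖ - 2 ≤
      (((if (e i₂).2 ≤ (e i₁).2 then mfun (e i₂).1 (e i₁).1
          else mfun (e i₂).1 ((e i₁).1 - 1)) : ℕ) : ℝ) ∧
    (((if (e i₂).2 ≤ (e i₁).2 then mfun (e i₂).1 (e i₁).1
        else mfun (e i₂).1 ((e i₁).1 - 1)) : ℕ) : ℝ) ≤ ‖y (e i₁).1‖ := by
  have hseq : IsTruncRetractionSeq y T :=
    ⟨hy0, hyinj, hyrange.trans range_quant, hymono, hT_val, hT_id⟩
  have hj₁ := (he_pos i₁ hi₁ (by omega)).1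
  have hlex := he_lex i₁ i₂ hi₁ h12 hi₂
  split_ifs with hk
  · have hlt : (e i₁).1 < (e i₂).1 := by omega
    obtain ⟨hlow, hup⟩ := hseq.level_mem_Icc_of_chain_apply_eq_trunc hlt (hm _ _ hlt)
    exact ⟨by linarith [hymono (e i₁).1 ((e i₁).1 + 1) (by omega)], hup⟩
  · have hlt : (e i₁).1 - 1 < (e i₂).1 := by omega
    obtain ⟨hlow, hup⟩ := hseq.level_mem_Icc_of_chain_apply_eq_trunc hlt (hm _ _ hlt)
    rw [Nat.sub_add_cancel hj₁] at hlow
    have hmono := hymono ((e i₁).1 - 1) (e i₁).1 (Nat.sub_le _ _)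
    constructor <;> linarith
end
end

section
/- For every $i\in\{0,\dots,c(n)-1\}$ and every $x\in D_n$, one has $\phi_{n,i}(x)=(r_n|_{D_n})^{-1}\big(T_{\|r_n(\phi_{n,i}(x))\|}(r_n(x))\big)$. -/
open Set

noncomputable section

variable {Γ : Type*} [TopologicalSpace Γ] [DiscreteTopology Γ]

/-!
Seen through `r_n`, every map `T_{n,i}` is a truncation on `M_{n,i}`: it fixes all points but
`c_i`, which it truncates at radius `‖r_n(c_i)‖ - 1 ≥ 0` (elements of `C_n` have a coordinate in
`Γ_n` of modulus at least `1`). Truncations compose, `T_s ∘ T_t = T_{min s t}`, and a truncation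
`y = T_s(x)` is always `T_{‖y‖}(x)`. Since `‖r_n(T_{n,i}(c_i))‖ < ‖r_n(c_i)‖` and the `c_i` are
enumerated by increasing norm, `T_{n,i}(c_i)` lies in `M_{n,i-1}`, so the composition is well
defined and descending induction on `i` gives the formula.
-/

section Quantization

lemma Real.sign_mul_abs (y : ℝ) : Real.sign y * |y| = y := by
  rcases lt_trichotomy y 0 with h | rfl | h
  · rw [Real.sign_of_neg h, abs_of_neg h]; ring
  · simp
  · rw [Real.sign_of_pos h, abs_of_pos h]; ring

lemma abs_ent (r : ℝ) : |ent r| = ⌊|r|⌋ := by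
  have hfloor : (0 : ℝ) ≤ ⌊|r|⌋ := by exact_mod_cast Int.floor_nonneg.mpr (abs_nonneg r)
  rcases lt_trichotomy r 0 with h | rfl | h
  · rw [ent, Real.sign_of_neg h, neg_one_mul, abs_neg, abs_of_nonneg hfloor]
  · simp [ent]
  · rw [ent, Real.sign_of_pos h, one_mul, abs_of_nonneg hfloor]

lemma ent_ent (r : ℝ) : ent (ent r) = ent r := by
  conv_lhs => rw [ent, abs_ent, Int.floor_intCast, ← abs_ent]
  exact Real.sign_mul_abs _

lemma one_le_abs_ent {r : ℝ} (h : 1 ≤ |r|) : 1 ≤ |ent r| := by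
  rw [abs_ent]
  exact_mod_cast Int.le_floor.mpr (by exact_mod_cast h)

@[simp]
lemma quant_apply (x : Linf Γ) (γ : Γ) : quant x γ = ent (x γ) := rfl

lemma quant_quant (x : Linf Γ) : quant (quant x) = quant x := by
  ext γ
  exact ent_ent (x γ)

end Quantization

section Truncation

lemma truncFun_of_nonneg {s : ℝ} (hs : 0 ≤ s) (u : ℝ) : truncFun s u = max (-s) (min s u) := by
  unfold truncFun
  split_ifs with h
  · rw [abs_le] at h
    rw [min_eq_right h.2, max_eq_right h.1]
  · rcases le_or_gt 0 u with hu | hu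
    · rw [abs_of_nonneg hu] at h ⊢
      rw [mul_div_assoc, div_self (by linarith), mul_one, min_eq_left (by linarith),
        max_eq_right (by linarith)]
    · rw [abs_of_neg hu] at h ⊢
      rw [mul_div_assoc, div_neg, div_self hu.ne, min_eq_right (by linarith),
        max_eq_left (by linarith)]
      ring

lemma abs_truncFun_of_nonneg {s : ℝ} (hs : 0 ≤ s) (u : ℝ) : |truncFun s u| = min s |u| := by
  rw [truncFun_of_nonneg hs]
  simp only [abs_eq_max_neg, max_def, min_def]
  split_ifs <;> linarith

lemma truncFun_truncFun {s t : ℝ} (hs : 0 ≤ s) (ht : 0 ≤ t) (u : ℝ) :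
    truncFun s (truncFun t u) = truncFun (min s t) u := by
  rw [truncFun_of_nonneg hs, truncFun_of_nonneg ht, truncFun_of_nonneg (le_min hs ht)]
  simp only [max_def, min_def]
  split_ifs <;> linarith

@[simp]
lemma trunc_apply (s : ℝ) (x : Linf Γ) (γ : Γ) : trunc s x γ = truncFun s (x γ) := rfl

lemma norm_trunc_le {s : ℝ} (hs : 0 ≤ s) (x : Linf Γ) : ‖trunc s x‖ ≤ s :=
  (BoundedContinuousFunction.norm_le hs).mpr fun γ => by
    rw [Real.norm_eq_abs, trunc_apply, abs_truncFun_of_nonneg hs]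
    exact min_le_left _ _

lemma trunc_norm_self (x : Linf Γ) : trunc ‖x‖ x = x := by
  ext γ
  exact if_pos (by simpa using x.norm_coe_le_norm γ)

lemma trunc_trunc {s t : ℝ} (hs : 0 ≤ s) (ht : 0 ≤ t) (x : Linf Γ) :
    trunc s (trunc t x) = trunc (min s t) x := by
  ext γ
  exact truncFun_truncFun hs ht (x γ)

lemma trunc_norm_trunc {s : ℝ} (hs : 0 ≤ s) (x : Linf Γ) :
    trunc ‖trunc s x‖ x = trunc s x := by
  have hle := norm_trunc_le hs x
  calc trunc ‖trunc s x‖ x = trunc (min ‖trunc s x‖ s) x := by rw [min_eq_left hle]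
    _ = trunc ‖trunc s x‖ (trunc s x) := (trunc_trunc (norm_nonneg _) hs x).symm
    _ = trunc s x := trunc_norm_self _

def IsTruncation (y x : Linf Γ) : Prop := ∃ s, 0 ≤ s ∧ y = trunc s x

lemma isTruncation_trunc {s : ℝ} (hs : 0 ≤ s) (x : Linf Γ) : IsTruncation (trunc s x) x :=
  ⟨s, hs, rfl⟩

lemma IsTruncation.refl (x : Linf Γ) : IsTruncation x x :=
  ⟨‖x‖, norm_nonneg x, (trunc_norm_self x).symm⟩

lemma IsTruncation.trans {x y z : Linf Γ} (hzy : IsTruncation z y) (hyx : IsTruncation y x) :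
    IsTruncation z x := by
  obtain ⟨s, hs, rfl⟩ := hzy
  obtain ⟨t, ht, rfl⟩ := hyx
  exact ⟨min s t, le_min hs ht, trunc_trunc hs ht x⟩

lemma IsTruncation.eq_trunc_norm {x y : Linf Γ} (h : IsTruncation y x) : y = trunc ‖y‖ x := by
  obtain ⟨s, hs, rfl⟩ := h
  exact (trunc_norm_trunc hs x).symm

end Truncation

section Chain

variable {α : Type*} (T : ℕ → α → α)

lemma chain_self (a : ℕ) : chain T a a = id := by
  simp [chain]

lemma chain_succ_right {a b : ℕ} (hab : a ≤ b) : chain T a (b + 1) = chain T a b ∘ T (b + 1) := by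
  obtain ⟨k, rfl⟩ := Nat.exists_eq_add_of_le hab
  simp only [chain, Nat.add_sub_cancel_left, show a + k + 1 - a = k + 1 by omega]

lemma chain_eq_comp {a b : ℕ} (hab : a < b) : chain T a b = T (a + 1) ∘ chain T (a + 1) b := by
  induction b, hab using Nat.le_induction with
  | base => rw [chain_succ_right T le_rfl, chain_self, chain_self]; rfl
  | succ b hab ih =>
    rw [chain_succ_right T (Nat.le_of_succ_le hab), ih, chain_succ_right T hab,
      Function.comp_assoc]

end Chain

lemma restr_apply_of_mem {S : Set Γ} {γ : Γ} (hγ : γ ∈ S) (x : Linf Γ) : restr S x γ = x γ :=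
  Set.indicator_of_mem hγ x

lemma exists_lt_abs_quant_of_notMem {S : Set Γ} {s : ℝ} (hs : 0 ≤ s) {w : Linf Γ}
    (hw : ∀ γ ∉ S, w γ = 0) (hq : quant w ∉ quant '' suppBall S s) :
    ∃ γ ∈ S, s < |quant w γ| := by
  have hqS : ∀ γ ∉ S, quant w γ = 0 := fun γ hγ => by simp [hw γ hγ, ent]
  by_contra! hle
  refine hq ⟨quant w, ⟨hqS, (BoundedContinuousFunction.norm_le hs).mpr fun γ => ?_⟩, quant_quant w⟩
  by_cases hγ : γ ∈ S
  · exact hle γ hγ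
  · simpa [hqS γ hγ] using hs

namespace BD

lemma one_le_s (B : BD Γ) (n : ℕ) : 1 ≤ B.s n :=
  one_le_pow₀ (by exact_mod_cast B.one_le_lam)

lemma C_map_apply (B : BD Γ) {n : ℕ} (hn : 1 ≤ n) (S : ℝ) (z : Linf Γ) {γ : Γ}
    (hγ : γ ∈ B.Γs n) :
    quant (B.i (n + 1) (quant (trunc S (restr (B.Γs (n + 1)) (B.i n z))))) γ =
      ent (ent (truncFun S (z γ))) := by
  have hγ' : γ ∈ B.Γs (n + 1) := (B.ssubset n hn).1 hγ
  rw [quant_apply, B.extension (n + 1) (by omega) _ γ hγ', quant_apply, trunc_apply,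
    restr_apply_of_mem hγ', B.extension n hn _ γ hγ]

lemma one_le_norm_restr_of_mem_C (B : BD Γ) {n : ℕ} (hn : 1 ≤ n) {x : Linf Γ}
    (hx : x ∈ B.C n) : 1 ≤ ‖restr (B.Γs n) x‖ := by
  obtain ⟨_, ⟨⟨w, hw, rfl⟩, hq⟩, rfl⟩ := hx
  obtain ⟨γ, hγ, hlt⟩ := exists_lt_abs_quant_of_notMem (zero_le_one.trans (B.one_le_s n)) hw.1 hq
  have htrunc : 1 ≤ |truncFun (B.s (n + 1)) (quant w γ)| := by
    rw [abs_truncFun_of_nonneg (zero_le_one.trans (B.one_le_s _))]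
    exact le_min (B.one_le_s _) ((B.one_le_s n).trans hlt.le)
  calc 1 ≤ |ent (ent (truncFun (B.s (n + 1)) (quant w γ)))| :=
        one_le_abs_ent (one_le_abs_ent htrunc)
    _ = ‖restr (B.Γs n) (quant (B.i (n + 1) (quant (trunc (B.s (n + 1))
          (restr (B.Γs (n + 1)) (B.i n (quant w))))))) γ‖ := by
        rw [restr_apply_of_mem hγ, B.C_map_apply hn _ _ hγ, Real.norm_eq_abs]
    _ ≤ _ := BoundedContinuousFunction.norm_coe_le_norm _ γ

/-- One step `T_{n,i+1} : M_{n,i+1} → M_{n,i}` of the composition `φ_{n,i}`, seen through `r_n`. -/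
lemma step_mem_and_isTruncation (B : BD Γ) {n N : ℕ} (hn : 1 ≤ n) {c : ℕ → Linf Γ}
    (hc_range : c '' Icc 1 N = B.C n)
    (hc_mono : MonotoneOn (fun k => ‖restr (B.Γs n) (c k)‖) (Icc 1 N))
    {i : ℕ} (hi : i < N) {f : Linf Γ → Linf Γ}
    (hf_val : f (c (i + 1)) ∈ B.D n ∧ restr (B.Γs n) (f (c (i + 1))) =
      trunc (‖restr (B.Γs n) (c (i + 1))‖ - 1) (restr (B.Γs n) (c (i + 1))))
    (hf_id : ∀ z ∈ B.M n ∪ c '' Icc 1 (i + 1), z ≠ c (i + 1) → f z = z)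
    {y : Linf Γ} (hy : y ∈ B.M n ∪ c '' Icc 1 (i + 1)) :
    f y ∈ B.M n ∪ c '' Icc 1 i ∧ IsTruncation (restr (B.Γs n) (f y)) (restr (B.Γs n) y) := by
  have hi' : i + 1 ∈ Icc 1 N := ⟨Nat.le_add_left 1 i, hi⟩
  by_cases hyc : y = c (i + 1)
  · subst hyc
    obtain ⟨hf_mem, hf_eq⟩ := hf_val
    have ht : 1 ≤ ‖restr (B.Γs n) (c (i + 1))‖ :=
      B.one_le_norm_restr_of_mem_C hn (hc_range ▸ mem_image_of_mem c hi')
    refine ⟨?_, hf_eq ▸ isTruncation_trunc (by linarith) _⟩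
    rcases hf_mem with hM | hC
    · exact Or.inl hM
    · rw [← hc_range] at hC
      obtain ⟨k, hk, hck⟩ := hC
      have hlt : ‖restr (B.Γs n) (c k)‖ < ‖restr (B.Γs n) (c (i + 1))‖ := by
        rw [hck, hf_eq]
        linarith [norm_trunc_le (by linarith : (0 : ℝ) ≤ ‖restr (B.Γs n) (c (i + 1))‖ - 1)
          (restr (B.Γs n) (c (i + 1)))]
      exact Or.inr ⟨k, ⟨hk.1, Nat.lt_succ_iff.mp (hc_mono.reflect_lt hk hi' hlt)⟩, hck⟩
  · rw [hf_id y hy hyc]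
    refine ⟨?_, IsTruncation.refl _⟩
    rcases hy with hM | ⟨k, hk, rfl⟩
    · exact Or.inl hM
    · have hki : k ≠ i + 1 := fun h => hyc (h ▸ rfl)
      exact Or.inr ⟨k, ⟨hk.1, by have := hk.2; omega⟩, rfl⟩

end BD

theorem phi_ni_formula_general (B : BD Γ) (n : ℕ) (hn : 1 ≤ n)
    (N : ℕ) (c : ℕ → Linf Γ)
    (hc_range : c '' Set.Icc 1 N = B.C n)
    (hc_mono : ∀ i j, 1 ≤ i → i ≤ j → j ≤ N →
      ‖restr (B.Γs n) (c i)‖ ≤ ‖restr (B.Γs n) (c j)‖)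
    (T : ℕ → Linf Γ → Linf Γ)
    (hT_val : ∀ i, 1 ≤ i → i ≤ N → T i (c i) ∈ B.D n ∧
      restr (B.Γs n) (T i (c i)) =
        trunc (‖restr (B.Γs n) (c i)‖ - 1) (restr (B.Γs n) (c i)))
    (hT_id : ∀ i, 1 ≤ i → i ≤ N →
      ∀ z ∈ B.M n ∪ c '' Set.Icc 1 i, z ≠ c i → T i z = z)
    : ∀ i, i < N → ∀ x ∈ B.D n,
      chain T i N x ∈ B.D n ∧
      restr (B.Γs n) (chain T i N x) =
        trunc ‖restr (B.Γs n) (chain T i N x)‖ (restr (B.Γs n) x) := by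
  have hmono : MonotoneOn (fun k => ‖restr (B.Γs n) (c k)‖) (Icc 1 N) :=
    fun k hk j hj hkj => hc_mono k j hk.1 hkj hj.2
  have hchain : ∀ i ≤ N, ∀ x ∈ B.D n, chain T i N x ∈ B.M n ∪ c '' Icc 1 i ∧
      IsTruncation (restr (B.Γs n) (chain T i N x)) (restr (B.Γs n) x) := by
    intro i hi x hx
    induction hi using Nat.decreasingInduction with
    | self =>
      rw [chain_self, id, hc_range]
      exact ⟨hx, IsTruncation.refl _⟩
    | of_succ i hi ih =>
      obtain ⟨hmem, htrunc⟩ := B.step_mem_and_isTruncation hn hc_range hmono hi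
        (hT_val (i + 1) (Nat.le_add_left 1 i) hi) (hT_id (i + 1) (Nat.le_add_left 1 i) hi) ih.1
      rw [chain_eq_comp T hi]
      exact ⟨hmem, htrunc.trans ih.2⟩
  intro i hi x hx
  obtain ⟨hmem, htrunc⟩ := hchain i hi.le x hx
  refine ⟨?_, htrunc.eq_trunc_norm⟩
  exact union_subset_union_right _ (hc_range ▸ image_mono (Icc_subset_Icc_right hi.le)) hmem

/-- Lemma 13 (`defstep4`): `φ_{n,i}(x) = (r_n|_{D_n})⁻¹(T_{‖r_n(φ_{n,i}(x))‖}(r_n(x)))`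
for every `i ∈ {0,…,c(n)-1}` and `x ∈ D_n`, where `φ_{n,i} = T_{n,i+1} ∘ ⋯ ∘ T_{n,c(n)}`. -/
theorem phi_ni_formula (B : BD Γ) (n : ℕ) (hn : 1 ≤ n)
    (N : ℕ) (c : ℕ → Linf Γ)
    (hc_inj : Set.InjOn c (Set.Icc 1 N))
    (hc_range : c '' Set.Icc 1 N = B.C n)
    (hc_mono : ∀ i j, 1 ≤ i → i ≤ j → j ≤ N →
      ‖restr (B.Γs n) (c i)‖ ≤ ‖restr (B.Γs n) (c j)‖)
    (T : ℕ → Linf Γ → Linf Γ)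
    (hT_val : ∀ i, 1 ≤ i → i ≤ N → T i (c i) ∈ B.D n ∧
      restr (B.Γs n) (T i (c i)) =
        trunc (‖restr (B.Γs n) (c i)‖ - 1) (restr (B.Γs n) (c i)))
    (hT_id : ∀ i, 1 ≤ i → i ≤ N →
      ∀ z ∈ B.M n ∪ c '' Set.Icc 1 i, z ≠ c i → T i z = z)
    : ∀ i, i < N → ∀ x ∈ B.D n,
      chain T i N x ∈ B.D n ∧
      restr (B.Γs n) (chain T i N x) =
        trunc ‖restr (B.Γs n) (chain T i N x)‖ (restr (B.Γs n) x) :=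
  phi_ni_formula_general B n hn N c hc_range hc_mono T hT_val hT_id
end
end
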